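/- Fix integers n ≥ 1 and m ≥ 1. Let L_m = ∏_{s=1}^{m} ((1/(n+2(m−s)))·r·(d/dr) + 1) and Q_m f = f'' + ((n−1+2m)/r)·f' be differential operators on smooth functions on (0,∞). Suppose f : (0,∞) → ℝ is smooth and satisfies (d^i/dr^i (L_m f))(1) = 0 for all i = 0, 1, …, m−1 and (Q_m^l f)(1) = 0 for all l = 0, 1, …, m−1. Then f^{(j)}(1) = 0 for every j = 0, 1, …, 2m−1. -/

import Mathlib

open Polynomial Set

/-- The first-order operator `E_c f = c·r·f' + f`. -/
noncomputable def Eop (c : ℝ) (f : ℝ → ℝ) : ℝ → ℝ :=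
  fun r => c * r * deriv f r + f r

/-- The operator `L_m = ∏_{s=1}^{m} ((1/(n+2(m-s)))·r·(d/dr) + 1)`. -/
noncomputable def Lop (n m : ℕ) (f : ℝ → ℝ) : ℝ → ℝ :=
  (List.range m).foldr
    (fun s g => Eop (((n : ℝ) + 2 * ((m : ℝ) - ((s : ℝ) + 1)))⁻¹) g) f

/-- The second-order operator `Q_m f = f'' + ((n-1+2m)/r)·f'`. -/
noncomputable def Qop (n m : ℕ) (f : ℝ → ℝ) : ℝ → ℝ :=
  fun r => deriv (deriv f) r + (((n : ℝ) - 1 + 2 * (m : ℝ)) / r) * deriv f r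

noncomputable def Th (g : ℝ → ℝ) : ℝ → ℝ := fun r => r * deriv g r

noncomputable def papp (p : Polynomial ℝ) (g : ℝ → ℝ) : ℝ → ℝ :=
  fun r => p.sum fun k a => a * Th^[k] g r

lemma papp_zero (g : ℝ → ℝ) (r : ℝ) : papp 0 g r = 0 := by simp [papp]

lemma papp_monomial (k : ℕ) (a : ℝ) (g : ℝ → ℝ) (r : ℝ) :
    papp (monomial k a) g r = a * Th^[k] g r := by
  simp [papp]

lemma papp_one (g : ℝ → ℝ) (r : ℝ) : papp 1 g r = g r := by
  have : (1 : Polynomial ℝ) = monomial 0 1 := by simp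
  rw [this, papp_monomial]; simp

lemma papp_add (p q : Polynomial ℝ) (g : ℝ → ℝ) (r : ℝ) :
    papp (p + q) g r = papp p g r + papp q g r := by
  unfold papp
  rw [Polynomial.sum_add_index] <;> intros <;> ring

lemma papp_C_mul (a : ℝ) (p : Polynomial ℝ) (g : ℝ → ℝ) (r : ℝ) :
    papp (C a * p) g r = a * papp p g r := by
  unfold papp
  rw [← smul_eq_C_mul, Polynomial.sum_smul_index (hf := by intro i; ring)]
  rw [Polynomial.sum_def, Polynomial.sum_def, Finset.mul_sum]
  exact Finset.sum_congr rfl fun k _ => by ring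

lemma papp_X_mul (p : Polynomial ℝ) (g : ℝ → ℝ) (r : ℝ) :
    papp (X * p) g r = papp p (Th g) r := by
  induction p using Polynomial.induction_on' with
  | add p q hp hq => rw [mul_add, papp_add, papp_add, hp, hq]
  | monomial k a =>
    rw [X_mul_monomial, papp_monomial, papp_monomial, Function.iterate_succ_apply]

lemma papp_Xpow_mul (k : ℕ) (p : Polynomial ℝ) (g : ℝ → ℝ) (r : ℝ) :
    papp (X ^ k * p) g r = papp p (Th^[k] g) r := by
  induction k generalizing g with
  | zero => simp
  | succ k ih =>
    rw [pow_succ, mul_comm (X ^ k) X, mul_assoc, papp_X_mul, ih,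
      ← Function.iterate_succ_apply]

lemma papp_sum {ι : Type*} (s : Finset ι) (h : ι → Polynomial ℝ) (g : ℝ → ℝ) (r : ℝ) :
    papp (∑ i ∈ s, h i) g r = ∑ i ∈ s, papp (h i) g r := by
  classical
  induction s using Finset.induction_on with
  | empty => simp [papp_zero]
  | insert _ _ hx ih => rw [Finset.sum_insert hx, Finset.sum_insert hx, papp_add, ih]

lemma papp_sub (p q : Polynomial ℝ) (g : ℝ → ℝ) (r : ℝ) :
    papp (p - q) g r = papp p g r - papp q g r := by
  have h := papp_add (p - q) q g r
  rw [sub_add_cancel] at h; linarith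

lemma papp_linear_mul (a : ℝ) (p : Polynomial ℝ) (g : ℝ → ℝ) (r : ℝ) :
    papp ((X + C a) * p) g r = papp p (Th g) r + a * papp p g r := by
  rw [add_mul, papp_add, papp_X_mul, papp_C_mul]

section analytic
variable {g : ℝ → ℝ}

lemma diffAt_of (h : ContDiffOn ℝ (⊤ : ℕ∞) g (Ioi 0)) {r : ℝ} (hr : r ∈ Ioi (0:ℝ)) :
    DifferentiableAt ℝ g r :=
  ((h r hr).contDiffAt (isOpen_Ioi.mem_nhds hr)).differentiableAt (by simp)

lemma contDiffOn_deriv (h : ContDiffOn ℝ (⊤ : ℕ∞) g (Ioi 0)) :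
    ContDiffOn ℝ (⊤ : ℕ∞) (deriv g) (Ioi 0) :=
  h.deriv_of_isOpen isOpen_Ioi (by simp)

lemma contDiffOn_Th (h : ContDiffOn ℝ (⊤ : ℕ∞) g (Ioi 0)) :
    ContDiffOn ℝ (⊤ : ℕ∞) (Th g) (Ioi 0) :=
  contDiffOn_id.mul (contDiffOn_deriv h)

lemma deriv_congr_Ioi {u v : ℝ → ℝ} (h : Set.EqOn u v (Ioi 0)) {r : ℝ}
    (hr : r ∈ Ioi (0:ℝ)) : deriv u r = deriv v r :=
  Filter.EventuallyEq.deriv_eq (h.eventuallyEq_of_mem (isOpen_Ioi.mem_nhds hr))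

lemma Th_congr {u v : ℝ → ℝ} (h : Set.EqOn u v (Ioi 0)) :
    Set.EqOn (Th u) (Th v) (Ioi 0) := fun r hr => by
  simp only [Th, deriv_congr_Ioi h hr]

lemma contDiffOn_iterTh (h : ContDiffOn ℝ (⊤ : ℕ∞) g (Ioi 0)) (k : ℕ) :
    ContDiffOn ℝ (⊤ : ℕ∞) (Th^[k] g) (Ioi 0) := by
  induction k with
  | zero => exact h
  | succ k ih => rw [Function.iterate_succ_apply']; exact contDiffOn_Th ih

lemma contDiffOn_iteratedDeriv (h : ContDiffOn ℝ (⊤ : ℕ∞) g (Ioi 0)) (k : ℕ) :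
    ContDiffOn ℝ (⊤ : ℕ∞) (iteratedDeriv k g) (Ioi 0) := by
  induction k with
  | zero => simpa [iteratedDeriv_zero] using h
  | succ k ih => rw [iteratedDeriv_succ]; exact contDiffOn_deriv ih

lemma iteratedDeriv_congr_Ioi {u v : ℝ → ℝ} (h : Set.EqOn u v (Ioi 0)) (k : ℕ) :
    Set.EqOn (iteratedDeriv k u) (iteratedDeriv k v) (Ioi 0) := by
  induction k with
  | zero => simpa [iteratedDeriv_zero] using h
  | succ k ih =>
    intro r hr
    rw [iteratedDeriv_succ, iteratedDeriv_succ]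
    exact deriv_congr_Ioi ih hr

end analytic
section analytic2
variable {g : ℝ → ℝ}

lemma papp_eq_sum (p : Polynomial ℝ) (g : ℝ → ℝ) :
    papp p g = fun r => ∑ k ∈ p.support, p.coeff k * Th^[k] g r := by
  funext r; rw [papp, Polynomial.sum_def]

lemma contDiffOn_papp (h : ContDiffOn ℝ (⊤ : ℕ∞) g (Ioi 0)) (p : Polynomial ℝ) :
    ContDiffOn ℝ (⊤ : ℕ∞) (papp p g) (Ioi 0) := by
  rw [papp_eq_sum]
  exact ContDiffOn.sum fun k _ => contDiffOn_const.mul (contDiffOn_iterTh h k)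

lemma Th_papp (h : ContDiffOn ℝ (⊤ : ℕ∞) g (Ioi 0)) (p : Polynomial ℝ) :
    Set.EqOn (Th (papp p g)) (papp p (Th g)) (Ioi 0) := by
  intro r hr
  have hd : deriv (papp p g) r = ∑ k ∈ p.support, p.coeff k * deriv (Th^[k] g) r := by
    rw [papp_eq_sum]
    rw [deriv_fun_sum fun k _ =>
      (diffAt_of (contDiffOn_iterTh h k) hr).const_mul _]
    exact Finset.sum_congr rfl fun k _ =>
      deriv_const_mul _ (diffAt_of (contDiffOn_iterTh h k) hr)
  show r * deriv (papp p g) r = _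
  rw [hd, Finset.mul_sum, papp_eq_sum]
  refine Finset.sum_congr rfl fun k _ => ?_
  have : r * deriv (Th^[k] g) r = Th^[k+1] g r := by
    rw [Function.iterate_succ_apply']; rfl
  rw [← Function.iterate_succ_apply, ← this]
  ring

lemma papp_Xpow (k : ℕ) (g : ℝ → ℝ) (r : ℝ) : papp (X ^ k) g r = Th^[k] g r := by
  rw [X_pow_eq_monomial, papp_monomial, one_mul]

lemma iterTh_papp (h : ContDiffOn ℝ (⊤ : ℕ∞) g (Ioi 0)) (p : Polynomial ℝ) (k : ℕ) :
    Set.EqOn (Th^[k] (papp p g)) (papp p (Th^[k] g)) (Ioi 0) := by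
  induction k with
  | zero => intro r hr; rfl
  | succ k ih =>
    intro r hr
    rw [Function.iterate_succ_apply', Function.iterate_succ_apply']
    calc Th (Th^[k] (papp p g)) r = Th (papp p (Th^[k] g)) r := Th_congr ih hr
      _ = papp p (Th (Th^[k] g)) r := Th_papp (contDiffOn_iterTh h k) p hr

lemma papp_mul (h : ContDiffOn ℝ (⊤ : ℕ∞) g (Ioi 0)) (p q : Polynomial ℝ) :
    Set.EqOn (papp (p * q) g) (papp p (papp q g)) (Ioi 0) := by
  induction p using Polynomial.induction_on' with
  | add p p' hp hp' =>
    intro r hr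
    rw [add_mul, papp_add, papp_add, hp hr, hp' hr]
  | monomial k a =>
    intro r hr
    rw [← C_mul_X_pow_eq_monomial, mul_assoc, papp_C_mul, papp_Xpow_mul,
      papp_C_mul, papp_Xpow, iterTh_papp h q k hr]

end analytic2

noncomputable def fall (i : ℕ) : Polynomial ℝ := ∏ j ∈ Finset.range i, (X - C (j:ℝ))
noncomputable def Apol (n m : ℕ) : Polynomial ℝ :=
  ∏ k ∈ Finset.range m, (X + C ((n:ℝ) + 2*(k:ℝ)))
noncomputable def Bpol (n m l : ℕ) : Polynomial ℝ :=
  ∏ j ∈ Finset.range l, ((X - C (2*(j:ℝ))) * (X + C ((n:ℝ) + 2*m - 2 - 2*j)))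

def xv (n k : ℕ) : ℝ := -((n:ℝ) + 2*k)

lemma monic_fall (i : ℕ) : (fall i).Monic :=
  monic_prod_of_monic _ _ fun j _ => monic_X_sub_C _

lemma natDegree_fall (i : ℕ) : (fall i).natDegree = i := by
  rw [fall, natDegree_prod _ _ fun j _ => X_sub_C_ne_zero _]
  simp only [natDegree_X_sub_C]
  simp

lemma monic_Apol (n m : ℕ) : (Apol n m).Monic :=
  monic_prod_of_monic _ _ fun k _ => monic_X_add_C _

lemma natDegree_Apol (n m : ℕ) : (Apol n m).natDegree = m := by
  rw [Apol, natDegree_prod _ _ fun k _ => (monic_X_add_C _).ne_zero]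
  simp only [natDegree_X_add_C]
  simp

lemma natDegree_Bpol_le (n m l : ℕ) : (Bpol n m l).natDegree ≤ 2 * l := by
  have hfac : ∀ j ∈ Finset.range l,
      (((X - C (2*(j:ℝ))) * (X + C ((n:ℝ) + 2*m - 2 - 2*j)))).natDegree ≤ 2 := by
    intro j _
    refine le_trans (natDegree_mul_le) ?_
    rw [natDegree_X_sub_C, natDegree_X_add_C]
  have h2 : ∑ j ∈ Finset.range l,
        (((X - C (2*(j:ℝ))) * (X + C ((n:ℝ) + 2*m - 2 - 2*j)))).natDegree
      ≤ ∑ _j ∈ Finset.range l, 2 := Finset.sum_le_sum hfac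
  refine le_trans (natDegree_prod_le _ _) (le_trans h2 ?_)
  simp [mul_comm]

lemma roots_dvd : ∀ (s : Finset ℝ) (g : Polynomial ℝ), (∀ a ∈ s, g.eval a = 0) →
    (∏ a ∈ s, (X - C a)) ∣ g := by
  intro s
  classical
  induction s using Finset.induction_on with
  | empty => intro g _; simpa using dvd_refl g
  | @insert a s ha ih =>
    intro g hg
    rw [Finset.prod_insert ha]
    obtain ⟨h, rfl⟩ := (dvd_iff_isRoot (p := g)).2 (hg a (Finset.mem_insert_self a s))
    refine mul_dvd_mul_left _ (ih h fun b hb => ?_)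
    have hev := hg b (Finset.mem_insert_of_mem hb)
    have hba : b ≠ a := fun hba => ha (hba ▸ hb)
    have h2 : (b - a) * h.eval b = 0 := by
      simpa [eval_mul, eval_sub, eval_X, eval_C] using hev
    rcases mul_eq_zero.1 h2 with h3 | h3
    · exact absurd (sub_eq_zero.1 h3) hba
    · exact h3

section endgame
variable {n m : ℕ}

lemma Bpol_eval_zero (hn : 1 ≤ n) {k l : ℕ} (hk : k < m) (hl : l < m) (h : m ≤ k + l) :
    (Bpol n m l).eval (xv n k) = 0 := by
  rw [Bpol, eval_prod]
  refine Finset.prod_eq_zero (i := m - 1 - k) (Finset.mem_range.2 (by omega)) ?_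
  have hcast : ((m - 1 - k : ℕ) : ℝ) = (m:ℝ) - 1 - (k:ℝ) := by
    have h1 : (1:ℕ) ≤ m := by omega
    have h2 : k ≤ m - 1 := by omega
    push_cast [Nat.cast_sub h2, Nat.cast_sub h1]
    ring
  rw [eval_mul, eval_add, eval_X, eval_C, hcast]
  have : xv n k + ((n:ℝ) + 2 * m - 2 - 2 * ((m:ℝ) - 1 - (k:ℝ))) = 0 := by
    rw [xv]; push_cast; ring
  rw [this, mul_zero]

lemma Bpol_eval_ne (hn : 1 ≤ n) {k l : ℕ} (hk : k < m) (hkl : k + l = m - 1) (hm : 1 ≤ m) :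
    (Bpol n m l).eval (xv n k) ≠ 0 := by
  rw [Bpol, eval_prod]
  rw [Finset.prod_ne_zero_iff]
  intro j hj
  rw [Finset.mem_range] at hj
  have hn1 : (1:ℝ) ≤ (n:ℝ) := by exact_mod_cast hn
  have hj1 : (j:ℝ) + 1 + (k:ℝ) ≤ (m:ℝ) - 1 := by
    have h3 : j + 1 + k + 1 ≤ m := by omega
    have h4 := (Nat.cast_le (α := ℝ)).2 h3
    push_cast at h4
    linarith
  simp only [eval_mul, eval_sub, eval_add, eval_X, eval_C, xv]
  refine mul_ne_zero ?_ ?_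
  · have : (0:ℝ) < (n:ℝ) + 2*k + 2*j := by positivity
    intro hcon
    nlinarith [this]
  · intro hcon
    nlinarith [hj1]

lemma matrix_surj (hn : 1 ≤ n) (hm : 1 ≤ m) (v : Fin m → ℝ) :
    ∃ c : Fin m → ℝ, ∀ k : Fin m,
      ∑ l : Fin m, (Bpol n m (l:ℕ)).eval (xv n (k:ℕ)) * c l = v k := by
  classical
  set M : Matrix (Fin m) (Fin m) ℝ :=
    Matrix.of fun k l : Fin m => (Bpol n m (l:ℕ)).eval (xv n (k:ℕ)) with hM
  have hdetN : (M.submatrix id Fin.revPerm).det ≠ 0 := by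
    have htri : (M.submatrix id Fin.revPerm).BlockTriangular id := by
      intro i j hij
      have hij' : (j:ℕ) < (i:ℕ) := hij
      show (Bpol n m ((Fin.revPerm j : Fin m):ℕ)).eval (xv n (i:ℕ)) = 0
      have hrev : ((Fin.revPerm j : Fin m):ℕ) = m - 1 - (j:ℕ) := by
        simp [Fin.revPerm, Fin.val_rev]
        omega
      rw [hrev]
      exact Bpol_eval_zero hn i.isLt (by omega) (by omega)
    rw [Matrix.det_of_upperTriangular htri]
    refine Finset.prod_ne_zero_iff.2 fun k _ => ?_
    show (Bpol n m ((Fin.revPerm k : Fin m):ℕ)).eval (xv n (k:ℕ)) ≠ 0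
    have hrev : ((Fin.revPerm k : Fin m):ℕ) = m - 1 - (k:ℕ) := by
      simp [Fin.revPerm, Fin.val_rev]
      omega
    rw [hrev]
    exact Bpol_eval_ne hn k.isLt (by omega) hm
  have hdet : M.det ≠ 0 := by
    have := Matrix.det_permute' Fin.revPerm M
    intro h0
    rw [h0, mul_zero] at this
    exact hdetN this
  have hunit : IsUnit M.det := isUnit_iff_ne_zero.2 hdet
  refine ⟨M⁻¹.mulVec v, fun k => ?_⟩
  have : M.mulVec (M⁻¹.mulVec v) = v := by
    rw [Matrix.mulVec_mulVec, Matrix.mul_nonsing_inv _ hunit, Matrix.one_mulVec]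
  calc ∑ l : Fin m, (Bpol n m (l:ℕ)).eval (xv n (k:ℕ)) * (M⁻¹.mulVec v) l
      = M.mulVec (M⁻¹.mulVec v) k := by
        simp [Matrix.mulVec, dotProduct, hM]
    _ = v k := by rw [this]

end endgame

section phi
variable {n m : ℕ} {Φ : Polynomial ℝ → ℝ}
  (hadd : ∀ p q, Φ (p + q) = Φ p + Φ q)
  (hsmul : ∀ a p, Φ (C a * p) = a * Φ p)

include hadd hsmul

lemma phi_zero : Φ 0 = 0 := by
  have := hsmul 0 0
  simpa using this

lemma phi_sub (p q : Polynomial ℝ) : Φ (p - q) = Φ p - Φ q := by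
  have h1 := hadd (p - q) q
  rw [sub_add_cancel] at h1
  linarith

lemma phi_sum {ι : Type*} (s : Finset ι) (h : ι → Polynomial ℝ) :
    Φ (∑ i ∈ s, h i) = ∑ i ∈ s, Φ (h i) := by
  classical
  induction s using Finset.induction_on with
  | empty => simpa using phi_zero hadd hsmul
  | insert _ _ hx ih => rw [Finset.sum_insert hx, Finset.sum_insert hx, hadd, ih]

lemma phi_mul_Apol (HA : ∀ i, i < m → Φ (fall i * Apol n m) = 0) :
    ∀ d (q : Polynomial ℝ), q.natDegree ≤ d → q.natDegree < m → Φ (q * Apol n m) = 0 := by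
  intro d
  induction d using Nat.strong_induction_on with
  | _ d ih =>
    intro q hqd hqm
    by_cases hq0 : q = 0
    · rw [hq0, zero_mul]; exact phi_zero hadd hsmul
    · set e := q.natDegree with he
      set a := q.coeff e with ha
      by_cases hr0 : q - C a * fall e = 0
      · have hq : q = C a * fall e := by
          have := sub_eq_zero.1 hr0; exact this
        rw [hq, mul_assoc, hsmul, HA e hqm, mul_zero]
      · set r := q - C a * fall e with hr
        have hrle : r.natDegree ≤ e := by
          refine le_trans (natDegree_sub_le _ _) ?_
          simp only [max_le_iff]
          exact ⟨le_rfl, le_trans (natDegree_C_mul_le _ _) (by rw [natDegree_fall])⟩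
        have hce : r.coeff e = 0 := by
          rw [hr, coeff_sub, coeff_C_mul]
          have : (fall e).coeff e = 1 := by
            have := (monic_fall e).coeff_natDegree
            rwa [natDegree_fall] at this
          rw [this, mul_one, ← ha, sub_self]
        have hne : r.natDegree ≠ e := by
          intro hcon
          have := mt leadingCoeff_eq_zero.1 hr0
          rw [leadingCoeff, hcon, hce] at this
          exact this rfl
        have hrlt : r.natDegree < e := lt_of_le_of_ne hrle hne
        have hqsplit : q = C a * fall e + r := by rw [hr]; ring
        rw [hqsplit, add_mul, hadd, mul_assoc, hsmul, HA e hqm, mul_zero, zero_add]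
        exact ih r.natDegree (lt_of_lt_of_le hrlt hqd) r le_rfl (lt_trans hrlt hqm)

lemma phi_vanish (hn : 1 ≤ n) (hm : 1 ≤ m)
    (HA : ∀ i, i < m → Φ (fall i * Apol n m) = 0)
    (HB : ∀ l, l < m → Φ (Bpol n m l) = 0) :
    ∀ p : Polynomial ℝ, p.natDegree < 2 * m → Φ p = 0 := by
  intro p hp
  obtain ⟨c, hc⟩ := matrix_surj (m := m) hn hm (fun k => p.eval (xv n (k:ℕ)))
  set g := p - ∑ l : Fin m, C (c l) * Bpol n m (l:ℕ) with hg
  have hPhig : Φ g = Φ p := by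
    rw [hg, phi_sub hadd hsmul, phi_sum hadd hsmul]
    have : ∀ l : Fin m, Φ (C (c l) * Bpol n m (l:ℕ)) = 0 := by
      intro l
      rw [hsmul, HB (l:ℕ) l.isLt, mul_zero]
    rw [Finset.sum_congr rfl fun l _ => this l]
    simp
  have hgev : ∀ k : ℕ, k < m → g.eval (xv n k) = 0 := by
    intro k hk
    rw [hg, eval_sub, eval_finset_sum]
    have := hc ⟨k, hk⟩
    simp only [eval_mul, eval_C]
    have heq : ∑ l : Fin m, c l * (Bpol n m (l:ℕ)).eval (xv n k)
        = ∑ l : Fin m, (Bpol n m (l:ℕ)).eval (xv n ((⟨k, hk⟩ : Fin m):ℕ)) * c l := by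
      refine Finset.sum_congr rfl fun l _ => ?_
      simp only [Fin.val_mk]
      ring
    rw [heq, this]
    simp
  have hxinj : ∀ x ∈ Finset.range m, ∀ y ∈ Finset.range m, xv n x = xv n y → x = y := by
    intro x _ y _ hxy
    rw [xv, xv] at hxy
    have : (x:ℝ) = (y:ℝ) := by linarith
    exact_mod_cast this
  have hAfactor : Apol n m = ∏ a ∈ (Finset.range m).image (fun k => xv n k), (X - C a) := by
    rw [Finset.prod_image hxinj, Apol]
    refine Finset.prod_congr rfl fun k _ => ?_
    rw [xv, map_neg, sub_neg_eq_add]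
  have hdvd : Apol n m ∣ g := by
    rw [hAfactor]
    refine roots_dvd _ g fun a hamem => ?_
    rcases Finset.mem_image.1 hamem with ⟨k, hk, rfl⟩
    exact hgev k (Finset.mem_range.1 hk)
  obtain ⟨q, hq⟩ := hdvd
  by_cases hg0 : g = 0
  · rw [← hPhig, hg0]; exact phi_zero hadd hsmul
  · have hq0 : q ≠ 0 := fun h0 => hg0 (by rw [hq, h0, mul_zero])
    have hgdeg : g.natDegree < 2 * m := by
      rw [hg]
      have hsum : (∑ l : Fin m, C (c l) * Bpol n m (l:ℕ)).natDegree ≤ 2 * m - 1 := by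
        refine natDegree_sum_le_of_forall_le _ _ fun l _ => ?_
        refine le_trans (natDegree_C_mul_le _ _) (le_trans (natDegree_Bpol_le n m _) ?_)
        have := l.isLt
        omega
      refine lt_of_le_of_lt (natDegree_sub_le _ _) ?_
      rw [max_lt_iff]
      constructor
      · exact hp
      · omega
    have hqdeg : q.natDegree < m := by
      have h1 : g.natDegree = m + q.natDegree := by
        rw [hq, natDegree_mul (monic_Apol n m).ne_zero hq0, natDegree_Apol]
      omega
    have : Φ g = 0 := by
      rw [hq, mul_comm]
      exact phi_mul_Apol hadd hsmul HA q.natDegree q le_rfl hqdeg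
    rw [← hPhig, this]

end phi

lemma pow_helper (r : ℝ) (i : ℕ) : r * ((i:ℝ) * r ^ (i-1)) = (i:ℝ) * r ^ i := by
  cases i with
  | zero => simp
  | succ k => push_cast [Nat.add_sub_cancel]; ring

lemma papp_fall {g : ℝ → ℝ} (h : ContDiffOn ℝ (⊤ : ℕ∞) g (Ioi 0)) (i : ℕ) :
    ∀ r ∈ Ioi (0:ℝ), papp (fall i) g r = r ^ i * iteratedDeriv i g r := by
  induction i with
  | zero =>
    intro r hr
    simp [fall, papp_one, iteratedDeriv_zero]
  | succ i ih =>
    intro r hr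
    have hfs : fall (i+1) = (X + C (-(i:ℝ))) * fall i := by
      rw [fall, Finset.prod_range_succ, mul_comm, fall, map_neg, ← sub_eq_add_neg]
    rw [hfs, papp_linear_mul]
    have h1 : papp (fall i) (Th g) r = Th (papp (fall i) g) r :=
      (Th_papp h (fall i) hr).symm
    have h2 : deriv (papp (fall i) g) r
        = deriv (fun s => s ^ i * iteratedDeriv i g s) r := deriv_congr_Ioi ih hr
    have h3 : deriv (fun s => s ^ i * iteratedDeriv i g s) r
        = (i:ℝ) * r ^ (i-1) * iteratedDeriv i g r + r ^ i * iteratedDeriv (i+1) g r := by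
      rw [deriv_fun_mul (differentiableAt_pow i) (diffAt_of (contDiffOn_iteratedDeriv h i) hr),
        deriv_pow_field, ← iteratedDeriv_succ]
    have h4 : Th (papp (fall i) g) r
        = (i:ℝ) * r ^ i * iteratedDeriv i g r + r ^ (i+1) * iteratedDeriv (i+1) g r := by
      show r * deriv (papp (fall i) g) r = _
      rw [h2, h3, mul_add]
      congr 1
      · linear_combination iteratedDeriv i g r * pow_helper r i
      · ring
    rw [h1, h4, ih r hr]
    ring

lemma Th_invpow_mul {u : ℝ → ℝ} (h : ContDiffOn ℝ (⊤ : ℕ∞) u (Ioi 0)) (a : ℕ) :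
    ∀ r ∈ Ioi (0:ℝ), Th (fun s => (s ^ a)⁻¹ * u s) r
      = (r ^ a)⁻¹ * (Th u r - (a:ℝ) * u r) := by
  intro r hr
  have hr0 : r ≠ 0 := ne_of_gt hr
  have hra : r ^ a ≠ 0 := pow_ne_zero a hr0
  have hdinv : DifferentiableAt ℝ (fun s : ℝ => (s ^ a)⁻¹) r :=
    (differentiableAt_pow a).inv hra
  have hderiv : deriv (fun s : ℝ => (s ^ a)⁻¹) r = -((a:ℝ) * r ^ (a-1)) / (r ^ a) ^ 2 := by
    rw [deriv_fun_inv'' (c := fun s : ℝ => s ^ a) (x := r) (differentiableAt_pow a) hra, deriv_pow_field]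
  show r * deriv (fun s => (s ^ a)⁻¹ * u s) r = _
  rw [deriv_fun_mul hdinv (diffAt_of h hr), hderiv]
  show r * (-((a:ℝ) * r ^ (a-1)) / (r ^ a) ^ 2 * u r + (r ^ a)⁻¹ * deriv u r)
    = (r ^ a)⁻¹ * (r * deriv u r - (a:ℝ) * u r)
  have key : r * ((a:ℝ) * r ^ (a-1)) = (a:ℝ) * r ^ a := pow_helper r a
  have e1 : -((a:ℝ) * r ^ (a-1)) / (r ^ a) ^ 2 * r = -(a:ℝ) / r ^ a := by
    rw [div_mul_eq_mul_div, div_eq_div_iff (pow_ne_zero 2 hra) hra]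
    linear_combination (-(r^a)) * key
  have e2 : r * (-((a:ℝ) * r ^ (a - 1)) / (r ^ a) ^ 2 * u r) = (-(a:ℝ) / r ^ a) * u r := by
    rw [← e1]; ring
  rw [mul_add, e2, neg_div, div_eq_mul_inv]
  ring

lemma contDiffOn_invpow_mul {u : ℝ → ℝ} (h : ContDiffOn ℝ (⊤ : ℕ∞) u (Ioi 0)) (a : ℕ) :
    ContDiffOn ℝ (⊤ : ℕ∞) (fun s => (s ^ a)⁻¹ * u s) (Ioi 0) := by
  refine ContDiffOn.mul (ContDiffOn.inv ?_ ?_) h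
  · exact (contDiffOn_id).pow a
  · intro s hs; exact pow_ne_zero a (ne_of_gt hs)

lemma Th_id_eq {g : ℝ → ℝ} (r : ℝ) : Th g r = r * deriv g r := rfl

lemma Qop_eq (n m : ℕ) {g : ℝ → ℝ} (h : ContDiffOn ℝ (⊤ : ℕ∞) g (Ioi 0)) (r : ℝ)
    (hr : r ∈ Ioi (0:ℝ)) :
    Qop n m g r = (r^2)⁻¹ * (Th (Th g) r + ((n:ℝ) + 2*m - 2) * Th g r) := by
  have hr0 : r ≠ 0 := ne_of_gt hr
  have hd : deriv (Th g) r = deriv g r + r * deriv (deriv g) r := by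
    unfold Th
    rw [deriv_fun_mul differentiableAt_fun_id (diffAt_of (contDiffOn_deriv h) hr), deriv_id'']
    ring
  simp only [Qop, Th_id_eq, hd]
  field_simp
  ring

lemma Qop_congr (n m : ℕ) {u v : ℝ → ℝ} (h : Set.EqOn u v (Ioi 0)) :
    Set.EqOn (Qop n m u) (Qop n m v) (Ioi 0) := by
  intro r hr
  have d1 : Set.EqOn (deriv u) (deriv v) (Ioi 0) := fun s hs => deriv_congr_Ioi h hs
  unfold Qop
  rw [deriv_congr_Ioi h hr, deriv_congr_Ioi d1 hr]

lemma Qiter {f : ℝ → ℝ} (n m : ℕ) (hf : ContDiffOn ℝ (⊤ : ℕ∞) f (Ioi 0)) (l : ℕ) :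
    Set.EqOn ((Qop n m)^[l] f)
      (fun r => (r ^ (2*l))⁻¹ * papp (Bpol n m l) f r) (Ioi 0) := by
  induction l with
  | zero =>
    intro r hr
    simp [Bpol, papp_one]
  | succ l ih =>
    have hk : ContDiffOn ℝ (⊤ : ℕ∞) (papp (Bpol n m l) f) (Ioi 0) := contDiffOn_papp hf _
    have hTh : Set.EqOn (Th (fun s => (s ^ (2*l))⁻¹ * papp (Bpol n m l) f s))
        (fun s => (s ^ (2*l))⁻¹
          * papp ((X + C (-(2*(l:ℝ)))) * Bpol n m l) f s) (Ioi 0) := by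
      intro s hs
      have h1 : Th (fun s => (s ^ (2*l))⁻¹ * papp (Bpol n m l) f s) s
          = (s ^ (2*l))⁻¹ * (Th (papp (Bpol n m l) f) s
            - ((2*l : ℕ):ℝ) * papp (Bpol n m l) f s) := Th_invpow_mul hk (2*l) s hs
      have h2 : Th (papp (Bpol n m l) f) s = papp (Bpol n m l) (Th f) s :=
        Th_papp hf _ hs
      show Th (fun s => (s ^ (2*l))⁻¹ * papp (Bpol n m l) f s) s
          = (s ^ (2*l))⁻¹ * papp ((X + C (-(2*(l:ℝ)))) * Bpol n m l) f s
      rw [h1, h2, papp_linear_mul]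
      push_cast
      ring
    intro r hr
    have e0 : (Qop n m)^[l+1] f r
        = Qop n m (fun s => (s ^ (2*l))⁻¹ * papp (Bpol n m l) f s) r := by
      rw [Function.iterate_succ_apply']
      exact Qop_congr n m ih hr
    have hsm : ContDiffOn ℝ (⊤ : ℕ∞) (fun s => (s ^ (2*l))⁻¹ * papp (Bpol n m l) f s) (Ioi 0) :=
      contDiffOn_invpow_mul hk (2*l)
    have e1 : Qop n m (fun s => (s ^ (2*l))⁻¹ * papp (Bpol n m l) f s) r
        = (r^2)⁻¹ * (Th (Th (fun s => (s ^ (2*l))⁻¹ * papp (Bpol n m l) f s)) r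
          + ((n:ℝ) + 2*m - 2) * Th (fun s => (s ^ (2*l))⁻¹ * papp (Bpol n m l) f s) r) :=
      Qop_eq n m hsm r hr
    have e2 : Th (Th (fun s => (s ^ (2*l))⁻¹ * papp (Bpol n m l) f s)) r
        = (r ^ (2*l))⁻¹ * (papp ((X + C (-(2*(l:ℝ)))) * Bpol n m l) (Th f) r
          - (2*(l:ℝ)) * papp ((X + C (-(2*(l:ℝ)))) * Bpol n m l) f r) := by
      have h3 : Th (Th (fun s => (s ^ (2*l))⁻¹ * papp (Bpol n m l) f s)) r
          = Th (fun s => (s ^ (2*l))⁻¹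
            * papp ((X + C (-(2*(l:ℝ)))) * Bpol n m l) f s) r := Th_congr hTh hr
      have h4 : Th (fun s => (s ^ (2*l))⁻¹
            * papp ((X + C (-(2*(l:ℝ)))) * Bpol n m l) f s) r
          = (r ^ (2*l))⁻¹ * (Th (papp ((X + C (-(2*(l:ℝ)))) * Bpol n m l) f) r
            - ((2*l : ℕ):ℝ) * papp ((X + C (-(2*(l:ℝ)))) * Bpol n m l) f r) :=
        Th_invpow_mul (contDiffOn_papp hf _) (2*l) r hr
      rw [h3, h4, Th_papp hf _ hr]
      push_cast
      ring
    have e3 : Th (fun s => (s ^ (2*l))⁻¹ * papp (Bpol n m l) f s) r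
        = (r ^ (2*l))⁻¹ * papp ((X + C (-(2*(l:ℝ)))) * Bpol n m l) f r := hTh hr
    have hBp : Bpol n m (l+1)
        = (X + C ((n:ℝ) + 2*m - 2 - 2*(l:ℝ))) * ((X + C (-(2*(l:ℝ)))) * Bpol n m l) := by
      have h1 : Bpol n m (l+1) = Bpol n m l
          * ((X - C (2*(l:ℝ))) * (X + C ((n:ℝ) + 2*m - 2 - 2*l))) :=
        Finset.prod_range_succ _ l
      rw [h1, map_neg, ← sub_eq_add_neg]
      ring
    have hpw : ((r:ℝ) ^ (2*(l+1)))⁻¹ = (r^2)⁻¹ * (r ^ (2*l))⁻¹ := by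
      rw [show 2*(l+1) = 2*l + 2 by ring, pow_add, mul_inv, mul_comm]
    have e4 : papp (Bpol n m (l+1)) f r
        = papp ((X + C (-(2*(l:ℝ)))) * Bpol n m l) (Th f) r
          + ((n:ℝ) + 2*m - 2 - 2*l) * papp ((X + C (-(2*(l:ℝ)))) * Bpol n m l) f r := by
      rw [hBp, papp_linear_mul]
    show (Qop n m)^[l+1] f r = (r ^ (2*(l+1)))⁻¹ * papp (Bpol n m (l+1)) f r
    rw [e0, e1, e2, e3, e4, hpw]
    ring

lemma bind_pure_eq_map (l : List ℕ) :
    (Bind.bind l (fun a : ℕ => (Pure.pure ((a:ℝ)) : List ℝ))) = l.map (fun a : ℕ => (a:ℝ)) := by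
  induction l with
  | nil => rfl
  | cons a l ih => simpa using ih

lemma foldr_Eop {f : ℝ → ℝ} (hf : ContDiffOn ℝ (⊤ : ℕ∞) f (Ioi 0)) :
    ∀ L : List ℝ, (∀ c ∈ L, c ≠ 0) →
    Set.EqOn (L.foldr Eop f)
      (fun r => L.prod * papp ((L.map fun c => X + C c⁻¹).prod) f r) (Ioi 0) := by
  intro L
  induction L with
  | nil =>
    intro _ r hr
    simp [papp_one]
  | cons c L ih =>
    intro hL r hr
    have hc : c ≠ 0 := hL c List.mem_cons_self
    have ihE : Set.EqOn (L.foldr Eop f)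
        (fun r => L.prod * papp ((L.map fun c => X + C c⁻¹).prod) f r) (Ioi 0) :=
      ih fun d hd => hL d (List.mem_cons_of_mem c hd)
    have hppf : ContDiffOn ℝ (⊤ : ℕ∞) (papp ((L.map fun c => X + C c⁻¹).prod) f) (Ioi 0) :=
      contDiffOn_papp hf _
    have hdG : deriv (fun s => L.prod * papp ((L.map fun c => X + C c⁻¹).prod) f s) r
        = L.prod * deriv (papp ((L.map fun c => X + C c⁻¹).prod) f) r :=
      deriv_const_mul _ (diffAt_of hppf hr)
    have hTp : r * deriv (papp ((L.map fun c => X + C c⁻¹).prod) f) r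
        = papp ((L.map fun c => X + C c⁻¹).prod) (Th f) r := Th_papp hf _ hr
    have hg : List.foldr Eop f L r
        = L.prod * papp ((L.map fun c => X + C c⁻¹).prod) f r := ihE hr
    have hd : deriv (List.foldr Eop f L) r
        = L.prod * deriv (papp ((L.map fun c => X + C c⁻¹).prod) f) r := by
      rw [deriv_congr_Ioi ihE hr, hdG]
    show Eop c (L.foldr Eop f) r = (c :: L).prod
        * papp (((c :: L).map fun c => X + C c⁻¹).prod) f r
    rw [List.map_cons, List.prod_cons, List.prod_cons, papp_linear_mul]
    rw [show Eop c (L.foldr Eop f) r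
        = c * r * deriv (L.foldr Eop f) r + L.foldr Eop f r from rfl, hd, hg]
    have expand : c * r * (L.prod * deriv (papp ((L.map fun c => X + C c⁻¹).prod) f) r)
        = c * L.prod * (r * deriv (papp ((L.map fun c => X + C c⁻¹).prod) f) r) := by ring
    rw [expand, hTp]
    field_simp

lemma list_range_prod {M : Type*} [CommMonoid M] (k : ℕ) (F : ℕ → M) :
    ((List.range k).map F).prod = ∏ i ∈ Finset.range k, F i := by
  induction k with
  | zero => simp
  | succ k ih =>
    rw [List.range_succ, List.map_append, List.prod_append, Finset.prod_range_succ, ih]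
    simp

lemma Lop_eq {f : ℝ → ℝ} (n m : ℕ) (hn : 1 ≤ n) (hf : ContDiffOn ℝ (⊤ : ℕ∞) f (Ioi 0)) :
    ∃ P : ℝ, P ≠ 0 ∧ Set.EqOn (Lop n m f)
      (fun r => P * papp (∏ k ∈ Finset.range m, (X + C ((n:ℝ) + 2*k))) f r) (Ioi 0) := by
  have hpos : ∀ s, s < m → (0:ℝ) < (n : ℝ) + 2 * ((m : ℝ) - ((s : ℝ) + 1)) := by
    intro s hs
    have h1 : ((s:ℝ) + 1) ≤ (m:ℝ) := by exact_mod_cast Nat.succ_le_of_lt hs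
    have h2 : (1:ℝ) ≤ (n:ℝ) := by exact_mod_cast hn
    nlinarith
  have hL : ∀ c ∈ (List.range m).map
      (fun s : ℕ => ((n : ℝ) + 2 * ((m : ℝ) - ((s : ℝ) + 1)))⁻¹), c ≠ 0 := by
    intro c hcmem
    rcases List.mem_map.1 hcmem with ⟨s, hs, rfl⟩
    rw [List.mem_range] at hs
    exact inv_ne_zero (ne_of_gt (hpos s hs))
  have hfold : Lop n m f = ((List.range m).map
      (fun s : ℕ => ((n : ℝ) + 2 * ((m : ℝ) - ((s : ℝ) + 1)))⁻¹)).foldr Eop f := by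
    unfold Lop
    rw [bind_pure_eq_map (List.range m), List.foldr_map, List.foldr_map]
  refine ⟨((List.range m).map
      (fun s : ℕ => ((n : ℝ) + 2 * ((m : ℝ) - ((s : ℝ) + 1)))⁻¹)).prod, ?_, ?_⟩
  · refine List.prod_ne_zero fun h0 => ?_
    exact hL 0 h0 rfl
  · have hpoly : ((((List.range m).map
        (fun s : ℕ => ((n : ℝ) + 2 * ((m : ℝ) - ((s : ℝ) + 1)))⁻¹)).map
          fun c => X + C c⁻¹).prod)
        = ∏ k ∈ Finset.range m, (X + C ((n:ℝ) + 2*(k:ℝ))) := by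
      rw [List.map_map]
      have hcomp : ((fun c : ℝ => X + C c⁻¹)
            ∘ fun s : ℕ => ((n : ℝ) + 2 * ((m : ℝ) - ((s : ℝ) + 1)))⁻¹)
          = fun s : ℕ => X + C ((n : ℝ) + 2 * ((m : ℝ) - ((s : ℝ) + 1))) := by
        funext s
        simp [inv_inv]
      rw [hcomp, list_range_prod]
      rw [← Finset.prod_range_reflect (fun k => X + C ((n:ℝ) + 2*(k:ℝ))) m]
      refine Finset.prod_congr rfl fun j hj => ?_
      rw [Finset.mem_range] at hj
      have hj' : j + 1 ≤ m := hj
      congr 2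
      have e : m - 1 - j = m - (j + 1) := by omega
      rw [e, Nat.cast_sub hj']
      push_cast
      ring
    intro r hr
    have h1 := foldr_Eop hf ((List.range m).map
      (fun s : ℕ => ((n : ℝ) + 2 * ((m : ℝ) - ((s : ℝ) + 1)))⁻¹)) hL hr
    rw [hpoly] at h1
    rw [hfold]
    exact h1

/-- Nondegeneracy of the `2m × 2m` system: if a smooth `f` on `(0,∞)` satisfies
`(d^i/dr^i (L_m f))(1) = 0` for `i = 0, …, m-1` and `(Q_m^l f)(1) = 0` for
`l = 0, …, m-1`, then `f^{(j)}(1) = 0` for `j = 0, …, 2m-1`. -/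
theorem stmt_15 (n m : ℕ) (hn : 1 ≤ n) (hm : 1 ≤ m) (f : ℝ → ℝ)
    (hf : ContDiffOn ℝ (⊤ : ℕ∞) f (Set.Ioi 0))
    (hL : ∀ i : ℕ, i < m → iteratedDeriv i (Lop n m f) 1 = 0)
    (hQ : ∀ l : ℕ, l < m → (Qop n m)^[l] f 1 = 0) :
    ∀ j : ℕ, j < 2 * m → iteratedDeriv j f 1 = 0 := by
  intro j hj
  have h1mem : (1:ℝ) ∈ Ioi (0:ℝ) := by norm_num
  have HB : ∀ l, l < m → papp (Bpol n m l) f 1 = 0 := by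
    intro l hl
    have h := Qiter n m hf l h1mem
    rw [hQ l hl] at h
    simpa using h.symm
  obtain ⟨P, hP0, hLP⟩ := Lop_eq n m hn hf
  have hLP' : Set.EqOn (Lop n m f) (fun r => P * papp (Apol n m) f r) (Ioi 0) := hLP
  have HA : ∀ i, i < m → papp (fall i * Apol n m) f 1 = 0 := by
    intro i hi
    have hsmooth : ContDiffOn ℝ (⊤ : ℕ∞) (fun r => P * papp (Apol n m) f r) (Ioi 0) :=
      contDiffOn_const.mul (contDiffOn_papp hf _)
    have h3 : iteratedDeriv i (Lop n m f) 1
        = iteratedDeriv i (fun r => P * papp (Apol n m) f r) 1 :=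
      iteratedDeriv_congr_Ioi hLP' i h1mem
    have h4 : papp (fall i) (fun r => P * papp (Apol n m) f r) 1
        = 1 ^ i * iteratedDeriv i (fun r => P * papp (Apol n m) f r) 1 :=
      papp_fall hsmooth i 1 h1mem
    have h5 : (fun r => P * papp (Apol n m) f r) = papp (C P * Apol n m) f := by
      funext r; rw [papp_C_mul]
    have h6 : papp (fall i * (C P * Apol n m)) f 1
        = papp (fall i) (papp (C P * Apol n m) f) 1 := papp_mul hf _ _ h1mem
    have h7 : fall i * (C P * Apol n m) = C P * (fall i * Apol n m) := by ring
    have h8 : P * papp (fall i * Apol n m) f 1 = 0 := by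
      calc P * papp (fall i * Apol n m) f 1
          = papp (C P * (fall i * Apol n m)) f 1 := (papp_C_mul _ _ _ _).symm
        _ = papp (fall i * (C P * Apol n m)) f 1 := by rw [h7]
        _ = papp (fall i) (papp (C P * Apol n m) f) 1 := h6
        _ = papp (fall i) (fun r => P * papp (Apol n m) f r) 1 := by rw [← h5]
        _ = 1 ^ i * iteratedDeriv i (fun r => P * papp (Apol n m) f r) 1 := h4
        _ = iteratedDeriv i (Lop n m f) 1 := by rw [← h3, one_pow, one_mul]
        _ = 0 := hL i hi
    exact (mul_eq_zero.1 h8).resolve_left hP0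
  have hvan := phi_vanish (Φ := fun p => papp p f 1)
    (fun p q => papp_add p q f 1) (fun a p => papp_C_mul a p f 1) hn hm HA HB
  have hfj : papp (fall j) f 1 = 0 := hvan (fall j) (by rw [natDegree_fall]; exact hj)
  have h9 := papp_fall hf j 1 h1mem
  rw [one_pow, one_mul] at h9
  rw [← h9, hfj]
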